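/- arXiv:2302.11902 — 11 statements merged into one kernel-verified Lean document; each statement's English description precedes it below -/
import Mathlib

section
/- A set S ⊆ E is keepable if and only if its complement E \ S is keepable. -/
/-- `S` is keepable in `G` if there are prices `p : V → [0,1]` such that an edge
    belongs to `S` iff its total price is at most 1. -/
def Keepable {V : Type*} (G : SimpleGraph V) (S : Set (Sym2 V)) : Prop :=
  ∃ p : V → ℝ, (∀ v, 0 ≤ p v ∧ p v ≤ 1) ∧
    ∀ u v, G.Adj u v → (s(u, v) ∈ S ↔ p u + p v ≤ 1)

lemma keepable_compl_aux {V : Type*} [Fintype V] (G : SimpleGraph V) (S : Set (Sym2 V))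
    (h : Keepable G S) : Keepable G (G.edgeSet \ S) := by
  classical
  obtain ⟨p, hp, hpS⟩ := h
  set T : Finset ℝ :=
    (Finset.univ.image (fun uv : V × V => p uv.1 + p uv.2)).filter (fun x => 1 < x) with hT
  obtain ⟨δ, hδ0, hδhalf, hδ⟩ :
      ∃ δ : ℝ, 0 < δ ∧ δ < 1/2 ∧ ∀ u v : V, 1 < p u + p v → 1 + 2*δ ≤ p u + p v := by
    by_cases hTe : T.Nonempty
    · refine ⟨min (1/4) ((T.min' hTe - 1)/2), ?_, ?_, ?_⟩
      · have h1 : 1 < T.min' hTe := by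
          have := T.min'_mem hTe
          simp only [hT, Finset.mem_filter] at this
          exact this.2
        have : (0:ℝ) < (T.min' hTe - 1)/2 := by linarith
        exact lt_min (by norm_num) this
      · exact lt_of_le_of_lt (min_le_left _ _) (by norm_num)
      · intro u v huv
        have hmem : p u + p v ∈ T := by
          simp only [hT, Finset.mem_filter, Finset.mem_image]
          exact ⟨⟨(u, v), Finset.mem_univ _, rfl⟩, huv⟩
        have h1 := T.min'_le _ hmem
        have h2 := min_le_right (1/4 : ℝ) ((T.min' hTe - 1)/2)
        linarith
    · refine ⟨1/4, by norm_num, by norm_num, ?_⟩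
      intro u v huv
      exact absurd ⟨p u + p v, by
        simp only [hT, Finset.mem_filter, Finset.mem_image]
        exact ⟨⟨(u, v), Finset.mem_univ _, rfl⟩, huv⟩⟩ hTe
  refine ⟨fun v => min 1 (1 - p v + δ), ?_, ?_⟩
  · intro v
    refine ⟨le_min (by norm_num) (by have := (hp v).2; linarith), min_le_left _ _⟩
  · intro u v huv
    constructor
    · rintro ⟨hE, hnS⟩
      have hgt : 1 < p u + p v := by
        by_contra hc
        push_neg at hc
        exact hnS ((hpS u v huv).mpr hc)
      have := hδ u v hgt
      have h1 : min 1 (1 - p u + δ) ≤ 1 - p u + δ := min_le_right _ _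
      have h2 : min 1 (1 - p v + δ) ≤ 1 - p v + δ := min_le_right _ _
      linarith
    · intro hle
      refine ⟨G.mem_edgeSet.mpr huv, ?_⟩
      intro hmemS
      simp only at hle
      have hle1 : p u + p v ≤ 1 := (hpS u v huv).mp hmemS
      by_cases hu : p u < δ
      · have heq : min 1 (1 - p u + δ) = 1 := min_eq_left (by linarith)
        have hv0 : 0 < min 1 (1 - p v + δ) :=
          lt_min (by norm_num) (by have := (hp v).2; linarith)
        rw [heq] at hle
        linarith
      · by_cases hv : p v < δ
        · have heq : min 1 (1 - p v + δ) = 1 := min_eq_left (by linarith)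
          have hu0 : 0 < min 1 (1 - p u + δ) :=
            lt_min (by norm_num) (by have := (hp u).2; linarith)
          rw [heq] at hle
          linarith
        · push_neg at hu hv
          have hu' : min 1 (1 - p u + δ) = 1 - p u + δ := min_eq_right (by linarith)
          have hv' : min 1 (1 - p v + δ) = 1 - p v + δ := min_eq_right (by linarith)
          rw [hu', hv'] at hle
          linarith

/-- A set `S ⊆ E` is keepable iff its complement `E \ S` is keepable. -/
theorem keepable_iff_compl_keepable {V : Type*} [Fintype V]
    (G : SimpleGraph V) (S : Set (Sym2 V)) (hS : S ⊆ G.edgeSet) :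
    Keepable G S ↔ Keepable G (G.edgeSet \ S) := by
  constructor
  · exact keepable_compl_aux G S
  · intro h
    have := keepable_compl_aux G _ h
    rwa [Set.diff_diff_cancel_left hS] at this
end

section
/- If there exists an alternating walk with respect to a set S ⊆ E, then S is not keepable, i.e., there are no prices p : V → [0,1] with S = {uv ∈ E : p(u)+p(v) ≤ 1}. -/
/-- An alternating walk w.r.t. `S`: a closed walk of even positive length whose
    `i`-th edge belongs to `S` iff `i` is odd. -/
def HasAltWalk {V : Type*} (G : SimpleGraph V) (S : Set (Sym2 V)) : Prop :=
  ∃ (ℓ : ℕ) (w : ℕ → V), 0 < ℓ ∧ Even ℓ ∧ w ℓ = w 0 ∧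
    ∀ i < ℓ, G.Adj (w i) (w (i + 1)) ∧ (s(w i, w (i + 1)) ∈ S ↔ Odd i)

/-! Along an alternating walk the prices at even positions strictly decrease: an edge outside `S`
has price sum `> 1` and the following edge in `S` has price sum `≤ 1`. A closed walk returns to
its start, which is absurd. -/

section Prices

variable {V : Type*} {G : SimpleGraph V} {S : Set (Sym2 V)} {p : V → ℝ}

theorem price_lt_of_adj_notMem_of_adj_mem
    (hp : ∀ u v, G.Adj u v → (s(u, v) ∈ S ↔ p u + p v ≤ 1)) {a b c : V}
    (hab : G.Adj a b) (hbc : G.Adj b c) (hab_S : s(a, b) ∉ S) (hbc_S : s(b, c) ∈ S) :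
    p c < p a := by
  have hgt : 1 < p a + p b := not_le.mp fun h ↦ hab_S ((hp a b hab).mpr h)
  have hle : p b + p c ≤ 1 := (hp b c hbc).mp hbc_S
  linarith

theorem price_lt_of_alternating_steps
    (hp : ∀ u v, G.Adj u v → (s(u, v) ∈ S ↔ p u + p v ≤ 1)) {ℓ : ℕ} {w : ℕ → V}
    (hw : ∀ i < ℓ, G.Adj (w i) (w (i + 1)) ∧ (s(w i, w (i + 1)) ∈ S ↔ Odd i))
    {k : ℕ} (hk : 2 * k + 2 ≤ ℓ) :
    p (w (2 * (k + 1))) < p (w (2 * k)) := by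
  obtain ⟨hadj₀, hS₀⟩ := hw (2 * k) (by omega)
  obtain ⟨hadj₁, hS₁⟩ := hw (2 * k + 1) (by omega)
  exact price_lt_of_adj_notMem_of_adj_mem hp hadj₀ hadj₁
    (fun h ↦ Nat.not_odd_iff_even.mpr (even_two_mul k) (hS₀.mp h))
    (hS₁.mpr (odd_two_mul_add_one k))

end Prices

theorem not_keepable_of_altWalk_general {V : Type*}
    (G : SimpleGraph V) (S : Set (Sym2 V))
    (h : HasAltWalk G S) : ¬Keepable G S := by
  rintro ⟨p, -, hp⟩
  obtain ⟨ℓ, w, hpos, ⟨m, rfl⟩, hclosed, hw⟩ := h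
  have hanti : StrictAntiOn (fun k ↦ p (w (2 * k))) (Set.Iic m) :=
    strictAntiOn_Iic_of_succ_lt fun k hk ↦
      price_lt_of_alternating_steps hp hw (by omega)
  have hlt : p (w (2 * m)) < p (w 0) :=
    hanti (Set.mem_Iic.mpr m.zero_le) (Set.mem_Iic.mpr le_rfl) (by omega)
  rw [two_mul, hclosed] at hlt
  exact lt_irrefl _ hlt

/-- If there is an alternating walk with respect to `S`, then `S` is not keepable. -/
theorem not_keepable_of_altWalk {V : Type*} [Fintype V]
    (G : SimpleGraph V) (S : Set (Sym2 V)) (hS : S ⊆ G.edgeSet)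
    (h : HasAltWalk G S) : ¬Keepable G S :=
  not_keepable_of_altWalk_general G S h
end

section
/- A set S ⊆ E is keepable if and only if there is no alternating walk with respect to S. -/
/-!
An alternating closed walk obstructs prices: along it the price drops strictly every two steps,
since an edge outside `S` has `p u + p v > 1` and the following edge of `S` has `p v + p w ≤ 1`.

Conversely, consider the states `(v, b) : V × Bool`, where `b` records whether the next edge has
to lie in `S`. Alternating closed walks are exactly cycles of the step relation between states, so
without them the step relation has a strictly decreasing potential `f` (the number of states
reachable from a state). The difference `h v = f (v, false) - f (v, true)` then satisfies
`h u + h v < 0` on the edges of `S` and `h u + h v > 0` on the other edges, and any increasing odd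
bounded map, here `arctan`, turns `h` into prices `1/2 + arctan (h v) / π`.
-/

open Relation

lemma exists_nat_strictAnti_of_acyclic {α : Type*} [Finite α] {r : α → α → Prop}
    (hr : ∀ a, ¬TransGen r a a) : ∃ f : α → ℕ, ∀ a b, r a b → f b < f a := by
  refine ⟨fun a => {c | TransGen r a c}.ncard, fun a b hab => Set.ncard_lt_ncard ?_⟩
  refine Set.ssubset_iff_of_subset (fun c hc => TransGen.head hab hc) |>.2 ⟨b, ?_, hr b⟩
  exact TransGen.single hab

section

variable {V : Type*} {G : SimpleGraph V} {S : Set (Sym2 V)}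

lemma Keepable.not_hasAltWalk (hK : Keepable G S) : ¬HasAltWalk G S := by
  obtain ⟨p, -, hp⟩ := hK
  rintro ⟨ℓ, w, hpos, ⟨m, rfl⟩, hclosed, hw⟩
  rw [← two_mul] at hpos hclosed hw
  have hdrop : ∀ k < m, p (w (2 * (k + 1))) < p (w (2 * k)) := by
    intro k hk
    obtain ⟨hadj₁, hS₁⟩ := hw (2 * k) (by omega)
    obtain ⟨hadj₂, hS₂⟩ := hw (2 * k + 1) (by omega)
    have hout : 1 < p (w (2 * k)) + p (w (2 * k + 1)) :=
      not_le.1 fun h => Nat.not_odd_iff_even.2 (even_two_mul k) (hS₁.1 ((hp _ _ hadj₁).2 h))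
    have hin : p (w (2 * k + 1)) + p (w (2 * k + 1 + 1)) ≤ 1 :=
      (hp _ _ hadj₂).1 (hS₂.2 (odd_two_mul_add_one k))
    rw [show 2 * (k + 1) = 2 * k + 1 + 1 by ring]
    linarith
  have hanti : StrictAntiOn (fun k => p (w (2 * k))) (Set.Iic m) :=
    strictAntiOn_Iic_of_succ_lt fun k hk => by simpa using hdrop k hk
  have hlt := hanti (Set.mem_Iic.2 (Nat.zero_le m)) (Set.mem_Iic.2 le_rfl) (by omega)
  simp only [hclosed, mul_zero] at hlt
  exact lt_irrefl _ hlt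

lemma keepable_of_mem_iff_add_nonpos (h : V → ℝ)
    (hh : ∀ u v, G.Adj u v → (s(u, v) ∈ S ↔ h u + h v ≤ 0)) : Keepable G S := by
  refine ⟨fun v => 1 / 2 + Real.arctan (h v) / Real.pi, fun v => ?_, fun u v huv => ?_⟩
  · have := Real.neg_pi_div_two_lt_arctan (h v)
    have := Real.arctan_lt_pi_div_two (h v)
    constructor <;>
      · field_simp
        linarith
  · have hsum : 1 / 2 + Real.arctan (h u) / Real.pi + (1 / 2 + Real.arctan (h v) / Real.pi) ≤ 1
        ↔ Real.arctan (h u) ≤ Real.arctan (-h v) := by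
      rw [Real.arctan_neg, ← sub_nonpos]
      field_simp
      constructor <;> intro <;> linarith
    rw [hh u v huv, hsum, Real.arctan_le_arctan_iff, le_neg_iff_add_nonpos_right]

def AltStep (G : SimpleGraph V) (S : Set (Sym2 V)) (s t : V × Bool) : Prop :=
  G.Adj s.1 t.1 ∧ t.2 = !s.2 ∧ (s(s.1, t.1) ∈ S ↔ s.2 = true)

lemma keepable_of_altStep_strictAnti (f : V × Bool → ℝ)
    (hf : ∀ s t, AltStep G S s t → f t < f s) : Keepable G S := by
  refine keepable_of_mem_iff_add_nonpos (fun v => f (v, false) - f (v, true))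
    fun u v huv => ?_
  by_cases huvS : s(u, v) ∈ S
  · have h₁ := hf (u, true) (v, false) ⟨huv, rfl, by simpa using huvS⟩
    have h₂ := hf (v, true) (u, false) ⟨huv.symm, rfl, by simpa [Sym2.eq_swap] using huvS⟩
    simp only [huvS, true_iff]
    linarith
  · have h₁ := hf (u, false) (v, true) ⟨huv, rfl, by simpa using huvS⟩
    have h₂ := hf (v, false) (u, true) ⟨huv.symm, rfl, by simpa [Sym2.eq_swap] using huvS⟩
    simp only [huvS, false_iff, not_le]
    linarith

def IsAltWalk (G : SimpleGraph V) (S : Set (Sym2 V)) (w : ℕ → V) (n : ℕ) : Prop :=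
  ∀ i < n, G.Adj (w i) (w (i + 1)) ∧ (s(w i, w (i + 1)) ∈ S ↔ Odd i)

lemma IsAltWalk.snoc {w : ℕ → V} {n : ℕ} {x : V} (hw : IsAltWalk G S w n)
    (hadj : G.Adj (w n) x) (hS : s(w n, x) ∈ S ↔ Odd n) :
    IsAltWalk G S (fun i => if i ≤ n then w i else x) (n + 1) := by
  intro i hi
  rcases Nat.lt_succ_iff_lt_or_eq.1 hi with hi | rfl
  · simpa [hi.le, Nat.succ_le_of_lt hi] using hw i hi
  · simpa using ⟨hadj, hS⟩

lemma IsAltWalk.exists_snoc_of_altStep {u : V} {s t : V × Bool} {w : ℕ → V} {n : ℕ}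
    (hw : IsAltWalk G S w n) (h0 : w 0 = u) (hn : w n = s.1) (hs : s.2 = true ↔ Odd n)
    (hstep : AltStep G S s t) :
    ∃ w', w' 0 = u ∧ w' (n + 1) = t.1 ∧ (t.2 = true ↔ Odd (n + 1)) ∧
      IsAltWalk G S w' (n + 1) := by
  obtain ⟨hadj, ht, hS⟩ := hstep
  rw [← hn] at hadj hS
  refine ⟨_, by simpa using h0, by simp, ?_, hw.snoc hadj (hS.trans hs)⟩
  simp [ht, Nat.odd_add_one, ← hs]

lemma exists_isAltWalk_of_reflTransGen {u : V} {t : V × Bool}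
    (h : ReflTransGen (AltStep G S) (u, false) t) :
    ∃ n w, w 0 = u ∧ w n = t.1 ∧ (t.2 = true ↔ Odd n) ∧ IsAltWalk G S w n := by
  induction h with
  | refl => exact ⟨0, fun _ => u, rfl, rfl, by simp, fun i hi => absurd hi (Nat.not_lt_zero i)⟩
  | tail _ hstep ih =>
    obtain ⟨n, w, h0, hn, hs, hw⟩ := ih
    exact ⟨n + 1, hw.exists_snoc_of_altStep h0 hn hs hstep⟩

lemma hasAltWalk_of_transGen_self {s : V × Bool} (h : TransGen (AltStep G S) s s) :
    HasAltWalk G S := by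
  obtain ⟨v, hv⟩ : ∃ v, TransGen (AltStep G S) (v, false) (v, false) := by
    obtain ⟨v, _ | _⟩ := s
    · exact ⟨v, h⟩
    · obtain ⟨⟨u, b⟩, hstep, hback⟩ := TransGen.head'_iff.1 h
      obtain rfl : b = false := hstep.2.1
      exact ⟨u, TransGen.tail' hback hstep⟩
  obtain ⟨s, hreach, hstep⟩ := TransGen.tail'_iff.1 hv
  obtain ⟨n, w, h0, hn, hs, hw⟩ := exists_isAltWalk_of_reflTransGen hreach
  obtain ⟨w', h0', hclosed, hodd, hw'⟩ := hw.exists_snoc_of_altStep h0 hn hs hstep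
  refine ⟨n + 1, w', n.succ_pos, ?_, hclosed.trans h0'.symm, hw'⟩
  simpa using hodd

end

theorem keepable_iff_no_altWalk_general {V : Type*} [Fintype V]
    (G : SimpleGraph V) (S : Set (Sym2 V)) :
    Keepable G S ↔ ¬HasAltWalk G S := by
  refine ⟨Keepable.not_hasAltWalk, fun hno => ?_⟩
  obtain ⟨f, hf⟩ := exists_nat_strictAnti_of_acyclic (r := AltStep G S)
    fun s hs => hno (hasAltWalk_of_transGen_self hs)
  exact keepable_of_altStep_strictAnti (fun s => f s) fun s t hst => Nat.cast_lt.2 (hf s t hst)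

/-- `S` is keepable if and only if there is no alternating walk with respect to `S`. -/
theorem keepable_iff_no_altWalk {V : Type*} [Fintype V]
    (G : SimpleGraph V) (S : Set (Sym2 V)) (hS : S ⊆ G.edgeSet) :
    Keepable G S ↔ ¬HasAltWalk G S :=
  keepable_iff_no_altWalk_general G S
end

section
/- A set S ⊆ E is keepable if and only if there exist a linear order ≺ on V and a subset R ⊆ V such that for every edge uv ∈ E with u ≺ v, uv ∈ S if and only if u ∈ R. -/
theorem add_le_one_iff_le_half_of_lex_le {a b : ℝ}
    (h : toLex (-|a - 1 / 2|, a) ≤ toLex (-|b - 1 / 2|, b)) : a + b ≤ 1 ↔ a ≤ 1 / 2 := by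
  rw [Prod.Lex.toLex_le_toLex] at h
  rcases h with h | ⟨h, hab⟩ <;>
    cases abs_cases (a - 1 / 2) <;> cases abs_cases (b - 1 / 2) <;>
    constructor <;> intro <;> linarith

theorem exists_linearOrder_lt_imp_le {V α : Type*} [LinearOrder α] (f : V → α) :
    ∃ lo : LinearOrder V, ∀ u v, lo.lt u v → f u ≤ f v := by
  let key : V → α ×ₗ Cardinal := fun v => toLex (f v, embeddingToCardinal v)
  have key_injective : Function.Injective key := fun u v huv =>
    embeddingToCardinal.injective (congrArg (fun x => (ofLex x).2) huv)
  exact ⟨LinearOrder.lift' key key_injective, fun u v huv =>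
    Prod.Lex.monotone_fst _ _ (show key u < key v from huv).le⟩

theorem Finite.exists_strictAnti_mem_Icc {V : Type*} [LinearOrder V] [Finite V] :
    ∃ ε : V → ℝ, StrictAnti ε ∧ ∀ v, ε v ∈ Set.Icc 0 (1 / 2) := by
  obtain ⟨e⟩ := nonempty_orderEmbedding_of_finite_infinite V ℕ
  refine ⟨fun v => (1 / 2 : ℝ) ^ (e v + 1), fun u v huv => ?_, fun v => ⟨by positivity, ?_⟩⟩
  · have he : e u < e v := e.lt_iff_lt.mpr huv
    exact pow_lt_pow_right_of_lt_one₀ (by norm_num) (by norm_num) (by omega)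
  · exact pow_le_of_le_one (by norm_num) (by norm_num) (by omega)

section

variable {V : Type*} {G : SimpleGraph V} {S : Set (Sym2 V)}

theorem Keepable.exists_linearOrder (h : Keepable G S) :
    ∃ (lo : LinearOrder V) (R : Set V),
      ∀ u v, G.Adj u v → lo.lt u v → (s(u, v) ∈ S ↔ u ∈ R) := by
  obtain ⟨p, -, hp⟩ := h
  obtain ⟨lo, hlo⟩ := exists_linearOrder_lt_imp_le fun v => toLex (-|p v - 1 / 2|, p v)
  exact ⟨lo, {u | p u ≤ 1 / 2}, fun u v hadj huv =>
    (hp u v hadj).trans (add_le_one_iff_le_half_of_lex_le (hlo u v huv))⟩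

theorem keepable_of_forall_lt [LinearOrder V] (p : V → ℝ) (hp01 : ∀ v, 0 ≤ p v ∧ p v ≤ 1)
    (hp : ∀ u v, G.Adj u v → u < v → (s(u, v) ∈ S ↔ p u + p v ≤ 1)) : Keepable G S := by
  refine ⟨p, hp01, fun u v hadj => ?_⟩
  rcases lt_trichotomy u v with huv | rfl | huv
  · exact hp u v hadj huv
  · exact absurd hadj G.irrefl
  · rw [Sym2.eq_swap, add_comm]
    exact hp v u hadj.symm huv

theorem keepable_of_linearOrder [LinearOrder V] [Finite V] (R : Set V)
    (hR : ∀ u v, G.Adj u v → u < v → (s(u, v) ∈ S ↔ u ∈ R)) : Keepable G S := by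
  classical
  obtain ⟨ε, hε_anti, hε⟩ := Finite.exists_strictAnti_mem_Icc (V := V)
  let p : V → ℝ := fun v => if v ∈ R then 1 / 2 - ε v else 1 / 2 + ε v
  have hp_near : ∀ v, |p v - 1 / 2| = ε v := fun v => by
    by_cases hv : v ∈ R <;> simp [p, hv, abs_of_nonneg (hε v).1]
  refine keepable_of_forall_lt p (fun v => ?_) fun u v hadj huv => ?_
  · have hv := abs_le.mp (hp_near v).le
    constructor <;> linarith [(hε v).2]
  · have hv := abs_le.mp (hp_near v).le
    have hεuv := hε_anti huv
    rw [hR u v hadj huv]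
    by_cases hu : u ∈ R <;> simp only [p, hu, if_true, if_false, true_iff, false_iff, not_le] <;>
      linarith

end

theorem keepable_iff_order_general {V : Type*} [Fintype V]
    (G : SimpleGraph V) (S : Set (Sym2 V)) :
    Keepable G S ↔
      ∃ (lo : LinearOrder V) (R : Set V),
        ∀ u v, G.Adj u v → lo.lt u v → (s(u, v) ∈ S ↔ u ∈ R) := by
  refine ⟨Keepable.exists_linearOrder, ?_⟩
  rintro ⟨lo, R, hR⟩
  exact keepable_of_linearOrder R hR

/-- `S` is keepable iff there exist a linear order `≺` on `V` and a set `R ⊆ V`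
    such that every edge `uv` with `u ≺ v` belongs to `S` iff `u ∈ R`. -/
theorem keepable_iff_order {V : Type*} [Fintype V]
    (G : SimpleGraph V) (S : Set (Sym2 V)) (hS : S ⊆ G.edgeSet) :
    Keepable G S ↔
      ∃ (lo : LinearOrder V) (R : Set V),
        ∀ u v, G.Adj u v → lo.lt u v → (s(u, v) ∈ S ↔ u ∈ R) :=
  keepable_iff_order_general G S
end

section
/- A set S ⊆ E is keepable if and only if there exists an ordered partition of V into sets A_1, …, A_ℓ (some possibly empty) such that an edge uv ∈ E with u ∈ A_i, v ∈ A_j belongs to S if and only if min(i,j) is odd. -/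
/-- Peeling lemma: on any finite set, prices can be encoded by indices. -/
theorem keepable_aux {V : Type*} (p : V → ℝ) :
    ∀ s : Finset V, ∃ (ℓ : ℕ) (idx : V → ℕ),
      (∀ v ∈ s, 1 ≤ idx v ∧ idx v ≤ ℓ) ∧
      ∀ u ∈ s, ∀ v ∈ s, (p u + p v ≤ 1 ↔ Odd (min (idx u) (idx v))) := by
  intro s
  induction s using Finset.strongInduction with
  | _ s ih =>
    rcases s.eq_empty_or_nonempty with rfl | hne
    · exact ⟨0, fun _ => 0, by simp, by simp⟩
    classical
    set A1 : Finset V := s.filter (fun v => ∀ w ∈ s, p v + p w ≤ 1) with hA1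
    set s1 : Finset V := s \ A1 with hs1
    set A2 : Finset V := s1.filter (fun v => ∀ w ∈ s1, 1 < p v + p w) with hA2
    set t : Finset V := s1 \ A2 with ht
    have hts : t ⊆ s := (Finset.sdiff_subset).trans Finset.sdiff_subset
    have hx : ∃ x ∈ s, x ∉ t := by
      by_cases hA1ne : A1.Nonempty
      · obtain ⟨x, hx⟩ := hA1ne
        refine ⟨x, (Finset.filter_subset _ _) hx, ?_⟩
        intro hxt
        exact (Finset.mem_sdiff.mp ((Finset.mem_sdiff.mp hxt).1)).2 hx
      · obtain ⟨v, hv, hvmin⟩ := s.exists_min_image p hne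
        obtain ⟨u, hu, humax⟩ := s.exists_max_image p hne
        have hvA1 : v ∉ A1 := fun h => hA1ne ⟨v, h⟩
        have hv' : ¬ (∀ w ∈ s, p v + p w ≤ 1) := by
          intro h; exact hvA1 (Finset.mem_filter.mpr ⟨hv, h⟩)
        push_neg at hv'
        obtain ⟨w0, hw0, hw0'⟩ := hv'
        have key : ∀ w ∈ s, 1 < p u + p w := by
          intro w hw
          have h1 : p w0 ≤ p u := humax w0 hw0
          have h2 : p v ≤ p w := hvmin w hw
          linarith
        have huA2 : u ∈ A2 := by
          refine Finset.mem_filter.mpr ⟨?_, fun w hw => key w (Finset.mem_sdiff.mp hw).1⟩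
          exact Finset.mem_sdiff.mpr ⟨hu, fun h => hA1ne ⟨u, h⟩⟩
        exact ⟨u, hu, fun hut => (Finset.mem_sdiff.mp hut).2 huA2⟩
    obtain ⟨x, hxs, hxt⟩ := hx
    have htss : t ⊂ s := Finset.ssubset_iff_of_subset hts |>.mpr ⟨x, hxs, hxt⟩
    obtain ⟨ℓ, idx, hbd, hiff⟩ := ih t htss
    set f : V → ℕ := fun v => if v ∈ A1 then 1 else if v ∈ A2 then 2 else idx v + 2 with hf
    have e1 : ∀ w, w ∈ A1 → f w = 1 := by intro w hw; simp [hf, hw]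
    have e2 : ∀ w, w ∉ A1 → w ∈ A2 → f w = 2 := by intro w h1 h2; simp [hf, h1, h2]
    have e3 : ∀ w, w ∉ A1 → w ∉ A2 → f w = idx w + 2 := by
      intro w h1 h2; simp [hf, h1, h2]
    have hge1 : ∀ w, 1 ≤ f w := by
      intro w
      by_cases h1 : w ∈ A1
      · rw [e1 w h1]
      by_cases h2 : w ∈ A2
      · rw [e2 w h1 h2]; omega
      · rw [e3 w h1 h2]; omega
    refine ⟨ℓ + 2, f, ?_, ?_⟩
    · intro v hv
      by_cases h1 : v ∈ A1
      · rw [e1 v h1]; omega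
      by_cases h2 : v ∈ A2
      · rw [e2 v h1 h2]; omega
      have hvt : v ∈ t := Finset.mem_sdiff.mpr ⟨Finset.mem_sdiff.mpr ⟨hv, h1⟩, h2⟩
      have := hbd v hvt
      rw [e3 v h1 h2]; omega
    · intro u hu v hv
      have hA1mem : ∀ a ∈ A1, ∀ b ∈ s, p a + p b ≤ 1 := by
        intro a ha b hb; exact (Finset.mem_filter.mp ha).2 b hb
      have hA2mem : ∀ a ∈ A2, ∀ b ∈ s1, 1 < p a + p b := by
        intro a ha b hb; exact (Finset.mem_filter.mp ha).2 b hb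
      by_cases hu1 : u ∈ A1
      · have hle : p u + p v ≤ 1 := hA1mem u hu1 v hv
        have hmin : min (f u) (f v) = 1 := by
          rw [e1 u hu1]; have := hge1 v; omega
        rw [hmin]; simp [hle]
      by_cases hv1 : v ∈ A1
      · have hle : p u + p v ≤ 1 := by have := hA1mem v hv1 u hu; linarith
        have hmin : min (f u) (f v) = 1 := by
          rw [e1 v hv1]; have := hge1 u; omega
        rw [hmin]; simp [hle]
      have hus1 : u ∈ s1 := Finset.mem_sdiff.mpr ⟨hu, hu1⟩
      have hvs1 : v ∈ s1 := Finset.mem_sdiff.mpr ⟨hv, hv1⟩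
      by_cases hu2 : u ∈ A2
      · have h : 1 < p u + p v := hA2mem u hu2 v hvs1
        have hmin : min (f u) (f v) = 2 := by
          rw [e2 u hu1 hu2]
          by_cases h2 : v ∈ A2
          · rw [e2 v hv1 h2]; omega
          · rw [e3 v hv1 h2]; omega
        rw [hmin]
        constructor
        · intro hle; linarith
        · intro hodd; exact absurd hodd (by decide)
      by_cases hv2 : v ∈ A2
      · have h : 1 < p v + p u := hA2mem v hv2 u hus1
        have hmin : min (f u) (f v) = 2 := by
          rw [e2 v hv1 hv2, e3 u hu1 hu2]; omega
        rw [hmin]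
        constructor
        · intro hle; linarith
        · intro hodd; exact absurd hodd (by decide)
      have hut : u ∈ t := Finset.mem_sdiff.mpr ⟨hus1, hu2⟩
      have hvt : v ∈ t := Finset.mem_sdiff.mpr ⟨hvs1, hv2⟩
      rw [e3 u hu1 hu2, e3 v hv1 hv2]
      have hmin : min (idx u + 2) (idx v + 2) = min (idx u) (idx v) + 2 := by omega
      rw [hmin, hiff u hut v hvt, Nat.odd_add]
      simp [Nat.odd_iff, Nat.even_iff]

/-- Price values realizing the parity pattern. -/
noncomputable def gval (i : ℕ) : ℝ :=
  if Odd i then 1/2 - (1/2 : ℝ)^i else 1/2 + (1/2 : ℝ)^i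

theorem gval_le (i j : ℕ) (hi : 1 ≤ i) (hij : i ≤ j) :
    (gval i + gval j ≤ 1 ↔ Odd i) := by
  have hpi : (0:ℝ) < (1/2 : ℝ)^i := by positivity
  have hpj : (0:ℝ) < (1/2 : ℝ)^j := by positivity
  have hle : (1/2 : ℝ)^j ≤ (1/2 : ℝ)^i :=
    pow_le_pow_of_le_one (by norm_num) (by norm_num) hij
  by_cases hoi : Odd i <;> by_cases hoj : Odd j
  · simp only [gval, if_pos hoi, if_pos hoj]
    constructor
    · intro _; exact hoi
    · intro _; linarith
  · simp only [gval, if_pos hoi, if_neg hoj]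
    constructor
    · intro _; exact hoi
    · intro _; linarith
  · have hij' : i < j := by
      rcases Nat.lt_or_ge i j with h | h
      · exact h
      · have h' : i = j := le_antisymm hij h
        subst h'
        exact absurd hoj hoi
    have hlt : (1/2 : ℝ)^j < (1/2 : ℝ)^i :=
      pow_lt_pow_right_of_lt_one₀ (by norm_num) (by norm_num) hij'
    simp only [gval, if_neg hoi, if_pos hoj]
    constructor
    · intro hle'; linarith
    · intro h; exact absurd h hoi
  · simp only [gval, if_neg hoi, if_neg hoj]
    constructor
    · intro hle'; linarith
    · intro h; exact absurd h hoi

theorem gval_iff (i j : ℕ) (hi : 1 ≤ i) (hj : 1 ≤ j) :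
    (gval i + gval j ≤ 1 ↔ Odd (min i j)) := by
  rcases le_total i j with h | h
  · rw [min_eq_left h]; exact gval_le i j hi h
  · rw [min_eq_right h, add_comm]; exact gval_le j i hj h

theorem gval_bounds (i : ℕ) (hi : 1 ≤ i) : 0 ≤ gval i ∧ gval i ≤ 1 := by
  have h1 : (0:ℝ) < (1/2 : ℝ)^i := by positivity
  have h2 : (1/2 : ℝ)^i ≤ (1/2 : ℝ)^1 :=
    pow_le_pow_of_le_one (by norm_num) (by norm_num) hi
  rw [pow_one] at h2
  unfold gval
  split <;> constructor <;> linarith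

/-- `S` is keepable iff there is an ordered partition `A_1, …, A_ℓ` of the
    vertices (given by an index function `idx : V → {1,…,ℓ}`) such that an edge
    `uv` belongs to `S` iff the minimum of the indices of `u` and `v` is odd. -/
theorem keepable_iff_ordered_partition {V : Type*} [Fintype V]
    (G : SimpleGraph V) (S : Set (Sym2 V)) (hS : S ⊆ G.edgeSet) :
    Keepable G S ↔
      ∃ (ℓ : ℕ) (idx : V → ℕ), (∀ v, 1 ≤ idx v ∧ idx v ≤ ℓ) ∧
        ∀ u v, G.Adj u v → (s(u, v) ∈ S ↔ Odd (min (idx u) (idx v))) := by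
  constructor
  · rintro ⟨p, _, hp⟩
    obtain ⟨ℓ, idx, hbd, hiff⟩ := keepable_aux p Finset.univ
    refine ⟨ℓ, idx, fun v => hbd v (Finset.mem_univ v), fun u v huv => ?_⟩
    rw [hp u v huv, hiff u (Finset.mem_univ u) v (Finset.mem_univ v)]
  · rintro ⟨ℓ, idx, hbd, hiff⟩
    refine ⟨fun v => gval (idx v), fun v => gval_bounds (idx v) (hbd v).1, ?_⟩
    intro u v huv
    rw [hiff u v huv, gval_iff (idx u) (idx v) (hbd u).1 (hbd v).1]
end

section
/- If R ⊆ V and ≺ is a linear order on V, then S = {uv ∈ E : u ≺ v and u ∈ R} ∪ {uv ∈ E : v ≺ u and v ∈ R} is keepable, i.e., there exist prices p : V → [0,1] with uv ∈ S iff p(u)+p(v) ≤ 1. -/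
/-- Given a linear order on `V` and a subset `R ⊆ V`, the edge set
    `S = {uv ∈ E : u ≺ v ∧ u ∈ R} ∪ {uv ∈ E : v ≺ u ∧ v ∈ R}` is keepable. -/
theorem order_set_keepable {V : Type*} [Fintype V] [LinearOrder V]
    (G : SimpleGraph V) (R : Set V) :
    ∃ p : V → ℝ, (∀ v, 0 ≤ p v ∧ p v ≤ 1) ∧
      ∀ u v, G.Adj u v →
        (((u < v ∧ u ∈ R) ∨ (v < u ∧ v ∈ R)) ↔ p u + p v ≤ 1) := by
  classical
  set r : V → ℕ := fun v => (Finset.univ.filter (· < v)).card with hr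
  have hmono : ∀ a b : V, a < b → r a < r b := by
    intro a b hab
    apply Finset.card_lt_card
    constructor
    · intro x hx
      simp only [Finset.mem_filter, Finset.mem_univ, true_and] at hx ⊢
      exact lt_trans hx hab
    · intro hsub
      have : a ∈ Finset.univ.filter (· < b) := by simp [hab]
      have := hsub this
      simp at this
  have hpow : ∀ k : ℕ, (0:ℝ) < (1/2)^(k+1) ∧ ((1:ℝ)/2)^(k+1) ≤ 1/2 := by
    intro k
    constructor
    · positivity
    · calc ((1:ℝ)/2)^(k+1) ≤ (1/2)^1 := by
            apply pow_le_pow_of_le_one (by norm_num) (by norm_num)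
            omega
        _ = 1/2 := by norm_num
  have hlt : ∀ a b : V, a < b → ((1:ℝ)/2)^(r b + 1) < (1/2)^(r a + 1) := by
    intro a b hab
    exact pow_lt_pow_right_of_lt_one₀ (by norm_num) (by norm_num) (by
      have := hmono a b hab; omega)
  refine ⟨fun v => 1/2 + (if v ∈ R then -(((1:ℝ)/2)^(r v + 1)) else (1/2)^(r v + 1)),
    ?_, ?_⟩
  · intro v
    dsimp only
    obtain ⟨h1, h2⟩ := hpow (r v)
    split <;> constructor <;> linarith
  · intro u v huv
    have hne : u ≠ v := huv.ne
    have key : ∀ a b : V, a < b →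
        ((a ∈ R) ↔ (1/2 + (if a ∈ R then -(((1:ℝ)/2)^(r a + 1)) else (1/2)^(r a + 1)))
          + (1/2 + (if b ∈ R then -(((1:ℝ)/2)^(r b + 1)) else (1/2)^(r b + 1))) ≤ 1) := by
      intro a b hab
      have h := hlt a b hab
      obtain ⟨hb1, _⟩ := hpow (r b)
      obtain ⟨ha1, _⟩ := hpow (r a)
      constructor
      · intro haR
        simp only [if_pos haR]
        split <;> linarith
      · intro hsum
        by_contra haR
        simp only [if_neg haR] at hsum
        split at hsum <;> linarith
    dsimp only
    rcases lt_or_gt_of_ne hne with h | h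
    · have hvu : ¬ v < u := not_lt_of_gt h
      rw [show ((u < v ∧ u ∈ R) ∨ (v < u ∧ v ∈ R)) ↔ u ∈ R by tauto]
      exact key u v h
    · have huv' : ¬ u < v := not_lt_of_gt h
      rw [show ((u < v ∧ u ∈ R) ∨ (v < u ∧ v ∈ R)) ↔ v ∈ R by tauto]
      rw [add_comm]
      exact key v u h
end

section
/- In the 6-vertex graph with vertices a,b,c,d,e,f and edges {af, ab, bf, bc, cd, ce, de}, the set S = {af, bc, de} is not keepable: for every price function p : V → [0,1], the edge set {uv : p(u)+p(v) ≤ 1} differs from S. -/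
/-- In the 6-vertex graph with vertices `a,b,c,d,e,f` (encoded as `0,…,5` in `Fin 6`)
    and edges `{af, ab, bf, bc, cd, ce, de}`, the set `S = {af, bc, de}` is not
    keepable: no prices `p : V → [0,1]` keep exactly the edges of `S`. -/
theorem three_paths_not_keepable :
    ∀ p : Fin 6 → ℝ, (∀ v, 0 ≤ p v ∧ p v ≤ 1) →
      ¬(p 0 + p 5 ≤ 1 ∧    -- af ∈ S
        p 1 + p 2 ≤ 1 ∧    -- bc ∈ S
        p 3 + p 4 ≤ 1 ∧    -- de ∈ S
        1 < p 0 + p 1 ∧    -- ab ∉ S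
        1 < p 1 + p 5 ∧    -- bf ∉ S
        1 < p 2 + p 3 ∧    -- cd ∉ S
        1 < p 2 + p 4)     -- ce ∉ S
    := by
  intro p hp ⟨h1,h2,h3,h4,h5,h6,h7⟩
  linarith [hp 0, hp 1, hp 2, hp 3, hp 4, hp 5, (hp 0).1, (hp 5).2]
end

section
/- Let M be a maximal matching and M* a maximum matching in a graph G with |M| = |M*|/2. Then every connected component of the symmetric difference M Δ M* is a path of length 3 whose middle edge belongs to M and whose two outer edges belong to M*. -/
def IsMatching {V : Type*} (G : SimpleGraph V) (M : Finset (Sym2 V)) : Prop :=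
  (∀ e ∈ M, e ∈ G.edgeSet) ∧
    ∀ e ∈ M, ∀ f ∈ M, e ≠ f → ∀ v : V, ¬(v ∈ e ∧ v ∈ f)

def IsMaximalMatching {V : Type*} [DecidableEq V] (G : SimpleGraph V)
    (M : Finset (Sym2 V)) : Prop :=
  IsMatching G M ∧ ∀ e ∈ G.edgeSet, e ∉ M → ¬IsMatching G (insert e M)

def IsMaximumMatching {V : Type*} (G : SimpleGraph V) (M : Finset (Sym2 V)) : Prop :=
  IsMatching G M ∧ ∀ M' : Finset (Sym2 V), IsMatching G M' → M'.card ≤ M.card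

/- Let `U` be the set of vertices covered by `M`, so `|U| = 2|M| = |M*|`. By maximality every edge
of `M*` meets `U`, and since `M*` is a matching no vertex lies on two of its edges; counting then
forces every vertex of `U` to lie on exactly one edge of `M*` and every edge of `M*` to have exactly
one endpoint in `U`. An edge `bc ∈ M` therefore extends by `M*`-edges `ab` and `cd` to a path whose
ends `a`, `d` are not covered by `M`, and no other edge of `M ∪ M*` touches it. -/

namespace Finset

variable {α β : Type*} {s : Finset α} {t : Finset β} {r : α → β → Prop}

theorem exists_rel_of_card_le (hst : #t ≤ #s) (hs : ∀ a ∈ s, ∃ b ∈ t, r a b)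
    (ht : ∀ b ∈ t, ∀ a₁ ∈ s, ∀ a₂ ∈ s, r a₁ b → r a₂ b → a₁ = a₂) :
    ∀ b ∈ t, ∃ a ∈ s, r a b := by
  choose g hgt hg using hs
  intro b hb
  obtain ⟨a, ha, rfl⟩ := surj_on_of_inj_on_of_card_le g hgt
    (fun a₁ a₂ ha₁ ha₂ h ↦ ht _ (hgt a₁ ha₁) a₁ ha₁ a₂ ha₂ (hg a₁ ha₁) (h ▸ hg a₂ ha₂)) hst b hb
  exact ⟨a, ha, hg a ha⟩

theorem rel_unique_of_card_le (hst : #t ≤ #s) (hs : ∀ a ∈ s, ∃ b ∈ t, r a b)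
    (ht : ∀ b ∈ t, ∀ a₁ ∈ s, ∀ a₂ ∈ s, r a₁ b → r a₂ b → a₁ = a₂) :
    ∀ a ∈ s, ∀ b₁ ∈ t, ∀ b₂ ∈ t, r a b₁ → r a b₂ → b₁ = b₂ := by
  choose g hgs hg using exists_rel_of_card_le hst hs ht
  have hsurj : ∀ a ∈ s, ∃ b hb, g b hb = a := fun a ha ↦ by
    obtain ⟨b, hb, hab⟩ := hs a ha
    exact ⟨b, hb, ht b hb _ (hgs b hb) a ha (hg b hb) hab⟩
  intro a ha b₁ hb₁ b₂ hb₂ h₁ h₂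
  exact inj_on_of_surj_on_of_card_le g hgs hsurj hst hb₁ hb₂
    ((ht b₁ hb₁ _ (hgs b₁ hb₁) a ha (hg b₁ hb₁) h₁).trans
      (ht b₂ hb₂ _ (hgs b₂ hb₂) a ha (hg b₂ hb₂) h₂).symm)

end Finset

open Finset

section Matching

variable {V : Type*} {G : SimpleGraph V} {M : Finset (Sym2 V)} {e f : Sym2 V} {v : V}

theorem IsMatching.eq_of_mem_of_mem (hM : IsMatching G M) (he : e ∈ M) (hf : f ∈ M)
    (hve : v ∈ e) (hvf : v ∈ f) : e = f := by
  by_contra hef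
  exact hM.2 e he f hf hef v ⟨hve, hvf⟩

theorem IsMatching.not_isDiag (hM : IsMatching G M) (he : e ∈ M) : ¬e.IsDiag :=
  G.not_isDiag_of_mem_edgeSet (hM.1 e he)

variable [DecidableEq V]

theorem IsMatching.insert (hM : IsMatching G M) (he : e ∈ G.edgeSet)
    (hfree : ∀ f ∈ M, ∀ v ∈ e, v ∉ f) : IsMatching G (insert e M) := by
  refine ⟨fun f hf ↦ ?_, fun f₁ hf₁ f₂ hf₂ hne v ⟨hv₁, hv₂⟩ ↦ ?_⟩
  · rcases mem_insert.mp hf with rfl | hf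
    exacts [he, hM.1 f hf]
  · rcases mem_insert.mp hf₁ with rfl | hf₁M <;>
      rcases mem_insert.mp hf₂ with rfl | hf₂M
    · exact hne rfl
    · exact hfree f₂ hf₂M v hv₁ hv₂
    · exact hfree f₁ hf₁M v hv₂ hv₁
    · exact hM.2 f₁ hf₁M f₂ hf₂M hne v ⟨hv₁, hv₂⟩

def coveredVertices (M : Finset (Sym2 V)) : Finset V := M.biUnion Sym2.toFinset

theorem mem_coveredVertices : v ∈ coveredVertices M ↔ ∃ e ∈ M, v ∈ e := by
  simp only [coveredVertices, mem_biUnion, Sym2.mem_toFinset]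

theorem IsMatching.card_coveredVertices (hM : IsMatching G M) :
    (coveredVertices M).card = 2 * M.card := by
  rw [coveredVertices, card_biUnion, sum_congr rfl
    fun e he ↦ Sym2.card_toFinset_of_not_isDiag e (hM.not_isDiag he), sum_const,
    smul_eq_mul, mul_comm]
  intro e he f hf hef
  simp only [Function.onFun, disjoint_left, Sym2.mem_toFinset]
  exact fun v hve hvf ↦ hM.2 e he f hf hef v ⟨hve, hvf⟩

theorem IsMaximalMatching.exists_mem_coveredVertices (hM : IsMaximalMatching G M)
    (he : e ∈ G.edgeSet) : ∃ v ∈ coveredVertices M, v ∈ e := by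
  by_contra! hfree
  have heM : e ∉ M := fun heM ↦
    hfree _ (mem_coveredVertices.mpr ⟨e, heM, e.out_fst_mem⟩) e.out_fst_mem
  exact hM.2 e he heM <| hM.1.insert he fun f hf v hve hvf ↦
    hfree v (mem_coveredVertices.mpr ⟨f, hf, hvf⟩) hve

variable {S : Finset (Sym2 V)}

theorem IsMaximalMatching.exists_mem_of_mem_coveredVertices (hM : IsMaximalMatching G M)
    (hS : IsMatching G S) (hcard : 2 * #M ≤ #S) :
    ∀ v ∈ coveredVertices M, ∃ f ∈ S, v ∈ f :=
  exists_rel_of_card_le (hM.1.card_coveredVertices ▸ hcard)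
    (fun f hf ↦ hM.exists_mem_coveredVertices (hS.1 f hf))
    (fun _ _ _ hf₁ _ hf₂ hv₁ hv₂ ↦ hS.eq_of_mem_of_mem hf₁ hf₂ hv₁ hv₂)

theorem IsMaximalMatching.eq_of_mem_coveredVertices (hM : IsMaximalMatching G M)
    (hS : IsMatching G S) (hcard : 2 * #M ≤ #S) :
    ∀ f ∈ S, ∀ u ∈ coveredVertices M, ∀ v ∈ coveredVertices M, u ∈ f → v ∈ f → u = v :=
  rel_unique_of_card_le (hM.1.card_coveredVertices ▸ hcard)
    (fun f hf ↦ hM.exists_mem_coveredVertices (hS.1 f hf))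
    (fun _ _ _ hf₁ _ hf₂ hv₁ hv₂ ↦ hS.eq_of_mem_of_mem hf₁ hf₂ hv₁ hv₂)

theorem IsMaximalMatching.notMem_of_mem (hM : IsMaximalMatching G M) (hS : IsMatching G S)
    (hcard : 2 * #M ≤ #S) (he : e ∈ M) : e ∉ S := by
  intro heS
  induction e using Sym2.ind with | h x y => ?_
  have hxy := hM.eq_of_mem_coveredVertices hS hcard _ heS x
    (mem_coveredVertices.mpr ⟨_, he, Sym2.mem_mk_left x y⟩) y
    (mem_coveredVertices.mpr ⟨_, he, Sym2.mem_mk_right x y⟩)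
    (Sym2.mem_mk_left x y) (Sym2.mem_mk_right x y)
  exact hM.1.not_isDiag he (Sym2.mk_isDiag_iff.mpr hxy)

theorem IsMaximalMatching.exists_partner (hM : IsMaximalMatching G M) (hS : IsMatching G S)
    (hcard : 2 * #M ≤ #S) (hv : v ∈ coveredVertices M) :
    ∃ a, s(a, v) ∈ S ∧ a ∉ coveredVertices M := by
  obtain ⟨f, hf, hvf⟩ := hM.exists_mem_of_mem_coveredVertices hS hcard v hv
  obtain ⟨a, rfl⟩ := Sym2.mem_iff_exists.mp hvf
  refine ⟨a, Sym2.eq_swap ▸ hf, fun ha ↦ hS.not_isDiag hf ?_⟩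
  exact Sym2.mk_isDiag_iff.mpr <| hM.eq_of_mem_coveredVertices hS hcard _ hf v hv a ha hvf
    (Sym2.mem_mk_right v a)

theorem IsMaximalMatching.exists_path_of_mem (hM : IsMaximalMatching G M) (hS : IsMatching G S)
    (hcard : 2 * #M ≤ #S) (he : e ∈ M) :
    ∃ a b c d : V, List.Nodup [a, b, c, d] ∧
      e = s(b, c) ∧ s(a, b) ∈ S ∧ s(c, d) ∈ S ∧
      ∀ f ∈ M ∪ S, f ≠ e → f ≠ s(a, b) → f ≠ s(c, d) → ∀ v ∈ f, v ∉ [a, b, c, d] := by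
  induction e using Sym2.ind with | h b c => ?_
  have hbU : b ∈ coveredVertices M := mem_coveredVertices.mpr ⟨_, he, Sym2.mem_mk_left b c⟩
  have hcU : c ∈ coveredVertices M := mem_coveredVertices.mpr ⟨_, he, Sym2.mem_mk_right b c⟩
  obtain ⟨a, hSab, haU⟩ := hM.exists_partner hS hcard hbU
  obtain ⟨d, hSdc, hdU⟩ := hM.exists_partner hS hcard hcU
  have hbc : b ≠ c := fun h ↦ hM.1.not_isDiag he (Sym2.mk_isDiag_iff.mpr h)
  have had : a ≠ d := by
    rintro rfl
    exact hbc (Sym2.congr_right.mp (hS.eq_of_mem_of_mem hSab hSdc (Sym2.mem_mk_left a b)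
      (Sym2.mem_mk_left a c)))
  have hScd : s(c, d) ∈ S := Sym2.eq_swap ▸ hSdc
  refine ⟨a, b, c, d, ?_, rfl, hSab, hScd, ?_⟩
  · have hab : a ≠ b := by rintro rfl; exact haU hbU
    have hac : a ≠ c := by rintro rfl; exact haU hcU
    have hbd : b ≠ d := by rintro rfl; exact hdU hbU
    have hcd : c ≠ d := by rintro rfl; exact hdU hcU
    simp [hab, hac, had, hbc, hbd, hcd]
  · intro f hf hfe hfab hfcd v hvf hv
    simp only [List.mem_cons, List.not_mem_nil, or_false] at hv
    rcases mem_union.mp hf with hfM | hfS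
    · have hvU : v ∈ coveredVertices M := mem_coveredVertices.mpr ⟨f, hfM, hvf⟩
      rcases hv with rfl | rfl | rfl | rfl
      · exact haU hvU
      · exact hfe (hM.1.eq_of_mem_of_mem hfM he hvf (Sym2.mem_mk_left _ _))
      · exact hfe (hM.1.eq_of_mem_of_mem hfM he hvf (Sym2.mem_mk_right _ _))
      · exact hdU hvU
    · rcases hv with rfl | rfl | rfl | rfl
      · exact hfab (hS.eq_of_mem_of_mem hfS hSab hvf (Sym2.mem_mk_left _ _))
      · exact hfab (hS.eq_of_mem_of_mem hfS hSab hvf (Sym2.mem_mk_right _ _))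
      · exact hfcd (hS.eq_of_mem_of_mem hfS hScd hvf (Sym2.mem_mk_left _ _))
      · exact hfcd (hS.eq_of_mem_of_mem hfS hScd hvf (Sym2.mem_mk_right _ _))

end Matching

theorem symmDiff_components_are_P4_general {V : Type*} [DecidableEq V]
    (G : SimpleGraph V) (M Mstar : Finset (Sym2 V))
    (hM : IsMaximalMatching G M) (hMstar : IsMaximumMatching G Mstar)
    (hsize : 2 * M.card = Mstar.card) :
    (∀ e ∈ M, e ∉ Mstar) ∧
    (∀ e ∈ M, ∃ a b c d : V, List.Nodup [a, b, c, d] ∧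
        e = s(b, c) ∧ s(a, b) ∈ Mstar ∧ s(c, d) ∈ Mstar ∧
        ∀ f ∈ M ∪ Mstar, f ≠ e → f ≠ s(a, b) → f ≠ s(c, d) →
          ∀ v : V, v ∈ f → v ∉ ([a, b, c, d] : List V)) ∧
    (∀ f ∈ Mstar, ∃ e ∈ M, ∃ v : V, v ∈ e ∧ v ∈ f) := by
  have hcard : 2 * M.card ≤ Mstar.card := hsize.le
  refine ⟨fun e he ↦ hM.notMem_of_mem hMstar.1 hcard he,
    fun e he ↦ hM.exists_path_of_mem hMstar.1 hcard he, fun f hf ↦ ?_⟩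
  obtain ⟨v, hvU, hvf⟩ := hM.exists_mem_coveredVertices (hMstar.1.1 f hf)
  obtain ⟨e, he, hve⟩ := mem_coveredVertices.mp hvU
  exact ⟨e, he, v, hve, hvf⟩

/-- If `M` is a maximal matching and `Mstar` a maximum matching with
    `|M| = |Mstar|/2`, then `M` and `Mstar` are disjoint (so `M Δ Mstar = M ∪ Mstar`)
    and every connected component of `M Δ Mstar` is a path of length 3 whose middle
    edge is in `M` and whose two outer edges belong to `Mstar`; moreover every edge of
    `Mstar` lies on such a path. -/
theorem symmDiff_components_are_P4 {V : Type*} [Fintype V] [DecidableEq V]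
    (G : SimpleGraph V) (M Mstar : Finset (Sym2 V))
    (hM : IsMaximalMatching G M) (hMstar : IsMaximumMatching G Mstar)
    (hsize : 2 * M.card = Mstar.card) :
    (∀ e ∈ M, e ∉ Mstar) ∧
    (∀ e ∈ M, ∃ a b c d : V, List.Nodup [a, b, c, d] ∧
        e = s(b, c) ∧ s(a, b) ∈ Mstar ∧ s(c, d) ∈ Mstar ∧
        ∀ f ∈ M ∪ Mstar, f ≠ e → f ≠ s(a, b) → f ≠ s(c, d) →
          ∀ v : V, v ∈ f → v ∉ ([a, b, c, d] : List V)) ∧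
    (∀ f ∈ Mstar, ∃ e ∈ M, ∃ v : V, v ∈ e ∧ v ∈ f) :=
  symmDiff_components_are_P4_general G M Mstar hM hMstar hsize
end

section
/- Let M be a maximal matching and M* a maximum matching in G with 2|M| = |M*|, and let B be the set of vertices matched by M. Then every edge of G has at least one endpoint in B, and every edge of M* has exactly one endpoint in B. -/
/-- Let `M` be maximal, `Mstar` maximum with `2|M| = |Mstar|`, and `B` the set of
    vertices matched by `M`. Then every edge of `G` has an endpoint in `B`, and
    every edge of `Mstar` has exactly one endpoint in `B`. -/
theorem matched_vertices_cover {V : Type*} [Fintype V] [DecidableEq V]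
    (G : SimpleGraph V) (M Mstar : Finset (Sym2 V))
    (hM : IsMaximalMatching G M) (hMstar : IsMaximumMatching G Mstar)
    (hsize : 2 * M.card = Mstar.card)
    (B : Set V) (hB : B = {v : V | ∃ e ∈ M, v ∈ e}) :
    (∀ e ∈ G.edgeSet, ∃ v ∈ B, v ∈ e) ∧
    (∀ e ∈ Mstar, ∃ u v : V, e = s(u, v) ∧ u ∈ B ∧ v ∉ B) := by
  subst hB
  have part1 : ∀ e ∈ G.edgeSet, ∃ v ∈ {v : V | ∃ e ∈ M, v ∈ e}, v ∈ e := by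
    intro e he
    by_contra h
    push_neg at h
    have heM : e ∉ M := by
      intro heM
      induction e using Sym2.ind with
      | _ u v => exact h u ⟨_, heM, Sym2.mem_mk_left u v⟩ (Sym2.mem_mk_left u v)
    apply hM.2 e he heM
    constructor
    · intro f hf
      rcases Finset.mem_insert.mp hf with rfl | hf
      · exact he
      · exact hM.1.1 f hf
    · intro f1 hf1 f2 hf2 hne v hv
      rcases Finset.mem_insert.mp hf1 with h1 | h1
      · rcases Finset.mem_insert.mp hf2 with h2 | h2
        · exact hne (h1.trans h2.symm)
        · exact h v ⟨f2, h2, hv.2⟩ (h1 ▸ hv.1)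
      · rcases Finset.mem_insert.mp hf2 with h2 | h2
        · exact h v ⟨f1, h1, hv.1⟩ (h2 ▸ hv.2)
        · exact hM.1.2 f1 h1 f2 h2 hne v hv
  refine ⟨part1, ?_⟩
  set Bfin : Finset V := Finset.univ.filter (fun v => ∃ e ∈ M, v ∈ e) with hBfin
  have memB : ∀ v : V, v ∈ Bfin ↔ v ∈ {v : V | ∃ e ∈ M, v ∈ e} := by
    intro v; simp [hBfin]
  -- |Bfin| ≤ 2 |M|
  have hcardB : Bfin.card ≤ 2 * M.card := by
    have hsub : Bfin ⊆ M.biUnion (fun e => Finset.univ.filter (· ∈ e)) := by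
      intro v hv
      rcases (memB v).mp hv with ⟨e, heM, hve⟩
      exact Finset.mem_biUnion.mpr ⟨e, heM, by simpa using hve⟩
    calc Bfin.card ≤ (M.biUnion (fun e => Finset.univ.filter (· ∈ e))).card :=
          Finset.card_le_card hsub
      _ ≤ ∑ e ∈ M, (Finset.univ.filter (· ∈ e)).card := Finset.card_biUnion_le
      _ ≤ ∑ _e ∈ M, 2 := by
          apply Finset.sum_le_sum
          intro e _
          induction e using Sym2.ind with
          | _ a b =>
            have : (Finset.univ.filter (· ∈ s(a, b))) ⊆ {a, b} := by
              intro v hv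
              simp only [Finset.mem_filter, Sym2.mem_iff] at hv
              simpa using hv.2
            calc _ ≤ ({a, b} : Finset V).card := Finset.card_le_card this
              _ ≤ 2 := Finset.card_insert_le _ _ |>.trans (by simp)
      _ = 2 * M.card := by rw [Finset.sum_const, smul_eq_mul, mul_comm]
  set g : Sym2 V → Finset V := fun e => Bfin.filter (· ∈ e) with hg
  have hone : ∀ e ∈ Mstar, 1 ≤ (g e).card := by
    intro e he
    obtain ⟨v, hvB, hve⟩ := part1 e (hMstar.1.1 e he)
    exact Finset.card_pos.mpr ⟨v, Finset.mem_filter.mpr ⟨(memB v).mpr hvB, hve⟩⟩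
  have hsum : ∑ e ∈ Mstar, (g e).card ≤ Mstar.card := by
    have hdisj : ∀ e ∈ Mstar, ∀ f ∈ Mstar, e ≠ f → Disjoint (g e) (g f) := by
      intro e he f hf hne
      rw [Finset.disjoint_left]
      intro v hve hvf
      exact hMstar.1.2 e he f hf hne v
        ⟨(Finset.mem_filter.mp hve).2, (Finset.mem_filter.mp hvf).2⟩
    rw [← Finset.card_biUnion hdisj]
    calc (Mstar.biUnion g).card ≤ Bfin.card := by
          apply Finset.card_le_card
          intro v hv
          rcases Finset.mem_biUnion.mp hv with ⟨e, _, hve⟩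
          exact (Finset.mem_filter.mp hve).1
      _ ≤ 2 * M.card := hcardB
      _ = Mstar.card := hsize
  have hexact : ∀ e ∈ Mstar, (g e).card = 1 := by
    intro e he
    by_contra hne
    have h2 : 2 ≤ (g e).card := by
      have := hone e he; omega
    have hrest : (Mstar.erase e).card ≤ ∑ f ∈ Mstar.erase e, (g f).card := by
      simpa using Finset.card_nsmul_le_sum (Mstar.erase e) (fun f => (g f).card) 1
        (fun f hf => hone f (Finset.mem_of_mem_erase hf))
    have hsplit : (g e).card + ∑ f ∈ Mstar.erase e, (g f).card = ∑ f ∈ Mstar, (g f).card :=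
      Finset.add_sum_erase Mstar (fun f => (g f).card) he
    have hcerase : (Mstar.erase e).card = Mstar.card - 1 := Finset.card_erase_of_mem he
    have hpos : 1 ≤ Mstar.card := Finset.card_pos.mpr ⟨e, he⟩
    omega
  intro e he
  have hedge := hMstar.1.1 e he
  induction e using Sym2.ind with
  | _ u v =>
    have huv : u ≠ v := (G.mem_edgeSet.mp hedge).ne
    obtain ⟨w, hw⟩ := Finset.card_pos.mp (by rw [hexact _ he]; norm_num)
    have hwB := (Finset.mem_filter.mp hw).1
    have hwe := (Finset.mem_filter.mp hw).2
    have hnot : ¬(u ∈ Bfin ∧ v ∈ Bfin) := by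
      rintro ⟨hu, hv⟩
      have h1 : u ∈ g s(u, v) := Finset.mem_filter.mpr ⟨hu, by simp⟩
      have h2 : v ∈ g s(u, v) := Finset.mem_filter.mpr ⟨hv, by simp⟩
      have := Finset.one_lt_card.mpr ⟨u, h1, v, h2, huv⟩
      rw [hexact _ he] at this
      omega
    rcases Sym2.mem_iff.mp hwe with rfl | rfl
    · refine ⟨w, v, rfl, (memB w).mp hwB, fun hv => hnot ⟨hwB, (memB v).mpr hv⟩⟩
    · exact ⟨w, u, Sym2.eq_swap, (memB w).mp hwB, fun hu => hnot ⟨(memB u).mpr hu, hwB⟩⟩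
end

section
/- For every graph G = (V,E) with n vertices and maximum matching M*, there exists a keepable set S ⊆ E such that every maximal matching of the graph (V,S) has size strictly greater than |M*|/2 (equivalently, at least |M*|/2 + 1), provided |M*| ≥ 1. -/
open Classical in
private lemma sym2_endpoints_card_le {V : Type*} [Fintype V] [DecidableEq V]
    (m : Sym2 V) : (Finset.univ.filter (· ∈ m)).card ≤ 2 := by
  induction m using Sym2.ind with
  | _ x y =>
    have hsub : (Finset.univ.filter (· ∈ s(x, y))) ⊆ {x, y} := by
      intro z hz
      simp only [Finset.mem_filter, Sym2.mem_iff] at hz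
      simp [hz.2]
    calc (Finset.univ.filter (· ∈ s(x, y))).card ≤ ({x, y} : Finset V).card :=
          Finset.card_le_card hsub
      _ ≤ 2 := (Finset.card_insert_le x {y}).trans (by simp)

open Classical in
/-- Core counting lemma: if `N` "covers" each edge of the matching `Mstar` and
`2 * N.card ≤ Mstar.card`, then every `N`-covered vertex lies on an `Mstar` edge and
each `Mstar` edge has at most one `N`-covered endpoint. -/
private lemma core_count {V : Type*} [Fintype V] [DecidableEq V]
    (Mstar N : Finset (Sym2 V))
    (hMd : ∀ e ∈ Mstar, ∀ f ∈ Mstar, e ≠ f → ∀ v : V, ¬(v ∈ e ∧ v ∈ f))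
    (hcov : ∀ e ∈ Mstar, ∃ v, v ∈ e ∧ ∃ m ∈ N, v ∈ m)
    (hcard : 2 * N.card ≤ Mstar.card) :
    (∀ v : V, (∃ m ∈ N, v ∈ m) → ∃ e ∈ Mstar, v ∈ e) ∧
      (∀ e ∈ Mstar, ∀ v w : V, v ∈ e → w ∈ e →
        (∃ m ∈ N, v ∈ m) → (∃ m ∈ N, w ∈ m) → v = w) := by
  classical
  set pk : Sym2 V → V := fun e =>
    if h : ∃ v, v ∈ e ∧ ∃ m ∈ N, v ∈ m then h.choose else e.out.1 with hpk
  have pkspec : ∀ e ∈ Mstar, pk e ∈ e ∧ ∃ m ∈ N, pk e ∈ m := by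
    intro e he
    have h : ∃ v, v ∈ e ∧ ∃ m ∈ N, v ∈ m := hcov e he
    simp only [hpk, dif_pos h]
    exact h.choose_spec
  set Cov : Finset V := Finset.univ.filter (fun v => ∃ m ∈ N, v ∈ m) with hCov
  have hsub : Mstar.image pk ⊆ Cov := by
    intro v hv
    obtain ⟨e, he, rfl⟩ := Finset.mem_image.1 hv
    simp only [hCov, Finset.mem_filter, Finset.mem_univ, true_and]
    exact (pkspec e he).2
  have hinj : Set.InjOn pk Mstar := by
    intro e he f hf hef
    by_contra hne
    exact hMd e he f hf hne (pk e) ⟨(pkspec e he).1, hef ▸ (pkspec f hf).1⟩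
  have hcard1 : Mstar.card ≤ Cov.card := by
    rw [← Finset.card_image_of_injOn hinj]
    exact Finset.card_le_card hsub
  have hcard2 : Cov.card ≤ 2 * N.card := by
    have hsub2 : Cov ⊆ N.biUnion (fun m => Finset.univ.filter (· ∈ m)) := by
      intro v hv
      simp only [hCov, Finset.mem_filter, Finset.mem_univ, true_and] at hv
      obtain ⟨m, hm, hvm⟩ := hv
      exact Finset.mem_biUnion.2 ⟨m, hm, by simp [hvm]⟩
    calc Cov.card ≤ _ := Finset.card_le_card hsub2
      _ ≤ ∑ m ∈ N, (Finset.univ.filter (· ∈ m)).card := Finset.card_biUnion_le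
      _ ≤ ∑ _m ∈ N, 2 := Finset.sum_le_sum fun m _ => sym2_endpoints_card_le m
      _ = 2 * N.card := by rw [Finset.sum_const, smul_eq_mul, mul_comm]
  have himg : (Mstar.image pk).card = Mstar.card := Finset.card_image_of_injOn hinj
  have heq : Mstar.image pk = Cov :=
    Finset.eq_of_subset_of_card_le hsub (by omega)
  constructor
  · intro v hv
    have hvC : v ∈ Cov := by
      simp only [hCov, Finset.mem_filter, Finset.mem_univ, true_and]; exact hv
    rw [← heq] at hvC
    obtain ⟨e, he, hpe⟩ := Finset.mem_image.1 hvC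
    exact ⟨e, he, hpe ▸ (pkspec e he).1⟩
  · intro e he v w hv hw hcv hcw
    have hv' : v ∈ Mstar.image pk := by
      rw [heq]
      simp only [hCov, Finset.mem_filter, Finset.mem_univ, true_and]; exact hcv
    have hw' : w ∈ Mstar.image pk := by
      rw [heq]
      simp only [hCov, Finset.mem_filter, Finset.mem_univ, true_and]; exact hcw
    obtain ⟨e1, he1, hpe1⟩ := Finset.mem_image.1 hv'
    obtain ⟨e2, he2, hpe2⟩ := Finset.mem_image.1 hw'
    have he1e : e1 = e := by
      by_contra hne
      exact hMd e1 he1 e he hne v ⟨hpe1 ▸ (pkspec e1 he1).1, hv⟩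
    have he2e : e2 = e := by
      by_contra hne
      exact hMd e2 he2 e he hne w ⟨hpe2 ▸ (pkspec e2 he2).1, hw⟩
    rw [← hpe1, ← hpe2, he1e, he2e]

set_option maxHeartbeats 1600000 in
/-- For every graph with a nonempty maximum matching `Mstar`, there is a keepable
    edge set `S` such that every maximal matching of the subgraph `(V, S)` has size
    strictly greater than `|Mstar|/2`. -/
theorem keepable_beats_half {V : Type*} [Fintype V] [DecidableEq V]
    (G : SimpleGraph V) (Mstar : Finset (Sym2 V))
    (hMstar : IsMaximumMatching G Mstar) (hpos : 1 ≤ Mstar.card) :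
    ∃ S : Set (Sym2 V), S ⊆ G.edgeSet ∧ Keepable G S ∧
      ∀ M : Finset (Sym2 V),
        IsMaximalMatching (SimpleGraph.fromEdgeSet S) M → Mstar.card < 2 * M.card := by
  classical
  by_cases hA : ∀ M : Finset (Sym2 V),
      IsMaximalMatching (SimpleGraph.fromEdgeSet (G.edgeSet : Set (Sym2 V))) M →
        Mstar.card < 2 * M.card
  · refine ⟨G.edgeSet, Set.Subset.rfl, ⟨fun _ => 0, fun v => by norm_num, ?_⟩, hA⟩
    intro u v huv
    constructor
    · intro _; norm_num
    · intro _; exact G.mem_edgeSet.2 huv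
  push_neg at hA
  obtain ⟨M₀, hM₀max, hM₀card⟩ := hA
  rw [SimpleGraph.fromEdgeSet_edgeSet] at hM₀max
  obtain ⟨⟨hM₀G, hM₀d⟩, hM₀ins⟩ := hM₀max
  -- F3 : no edge between two M₀-uncovered vertices
  have F3 : ∀ a b : V, G.Adj a b → (∃ m ∈ M₀, a ∈ m) ∨ (∃ m ∈ M₀, b ∈ m) := by
    intro a b hab
    by_contra hcon
    push_neg at hcon
    obtain ⟨ha, hb⟩ := hcon
    have hmem : s(a, b) ∈ G.edgeSet := G.mem_edgeSet.2 hab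
    have hnotin : s(a, b) ∉ M₀ := fun hx => ha _ hx (Sym2.mem_mk_left a b)
    apply hM₀ins _ hmem hnotin
    constructor
    · intro e he
      rcases Finset.mem_insert.1 he with rfl | he
      · exact hmem
      · exact hM₀G e he
    · intro e he f hf hef v hv
      rcases Finset.mem_insert.1 he with rfl | heM
      · rcases Finset.mem_insert.1 hf with rfl | hfM
        · exact hef rfl
        · rcases Sym2.mem_iff.1 hv.1 with rfl | rfl
          · exact ha f hfM hv.2
          · exact hb f hfM hv.2
      · rcases Finset.mem_insert.1 hf with rfl | hfM
        · rcases Sym2.mem_iff.1 hv.2 with rfl | rfl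
          · exact ha e heM hv.1
          · exact hb e heM hv.1
        · exact hM₀d e heM f hfM hef v hv
  -- every Mstar edge has an M₀-covered endpoint
  have L1 : ∀ e ∈ Mstar, ∃ v, v ∈ e ∧ ∃ m ∈ M₀, v ∈ m := by
    intro e he
    by_contra hcon
    push_neg at hcon
    have heG : e ∈ G.edgeSet := hMstar.1.1 e he
    have hne : e ∉ M₀ := fun hx =>
      (hcon e.out.1 (Sym2.out_fst_mem e) e hx) (Sym2.out_fst_mem e)
    apply hM₀ins e heG hne
    constructor
    · intro f hf
      rcases Finset.mem_insert.1 hf with rfl | hf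
      · exact heG
      · exact hM₀G f hf
    · intro x hx y hy hxy v hv
      rcases Finset.mem_insert.1 hx with rfl | hxM
      · rcases Finset.mem_insert.1 hy with rfl | hyM
        · exact hxy rfl
        · exact hcon v hv.1 y hyM hv.2
      · rcases Finset.mem_insert.1 hy with rfl | hyM
        · exact hcon v hv.2 x hxM hv.1
        · exact hM₀d x hxM y hyM hxy v hv
  obtain ⟨coreA, coreB⟩ := core_count Mstar M₀ hMstar.1.2 L1 (by omega)
  have hMnd : ∀ e ∈ Mstar, ¬e.IsDiag := fun e he =>
    G.not_isDiag_of_mem_edgeSet (hMstar.1.1 e he)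
  -- split each Mstar edge into uncovered endpoint `uW` and covered endpoint `cW`
  have hsplit : ∀ e : Sym2 V, ∃ u c : V, e ∈ Mstar →
      e = s(u, c) ∧ u ≠ c ∧ ¬(∃ m ∈ M₀, u ∈ m) ∧ (∃ m ∈ M₀, c ∈ m) := by
    intro e
    by_cases he : e ∈ Mstar
    · obtain ⟨v, hv, hvc⟩ := L1 e he
      have hspec : s(v, Sym2.Mem.other' hv) = e := Sym2.other_spec' hv
      have hne : Sym2.Mem.other' hv ≠ v := by
        rw [← Sym2.other_eq_other']
        exact Sym2.other_ne (hMnd e he) hv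
      refine ⟨Sym2.Mem.other' hv, v, fun _ => ⟨?_, hne, ?_, hvc⟩⟩
      · exact hspec.symm.trans Sym2.eq_swap
      · intro huc
        have humem : Sym2.Mem.other' hv ∈ e := Sym2.other_mem' hv
        exact hne (coreB e he _ v humem hv huc hvc)
    · exact ⟨e.out.1, e.out.1, fun h => absurd h he⟩
  choose uW cW hspec using hsplit
  have spec1 : ∀ e ∈ Mstar, e = s(uW e, cW e) := fun e he => (hspec e he).1
  have spec2 : ∀ e ∈ Mstar, uW e ≠ cW e := fun e he => (hspec e he).2.1
  have spec3 : ∀ e ∈ Mstar, ¬(∃ m ∈ M₀, uW e ∈ m) := fun e he => (hspec e he).2.2.1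
  have spec4 : ∀ e ∈ Mstar, ∃ m ∈ M₀, cW e ∈ m := fun e he => (hspec e he).2.2.2
  have memu : ∀ e ∈ Mstar, uW e ∈ e := by
    intro e he
    have h := Sym2.mem_mk_left (uW e) (cW e)
    rwa [← spec1 e he] at h
  have memc : ∀ e ∈ Mstar, cW e ∈ e := by
    intro e he
    have h := Sym2.mem_mk_right (uW e) (cW e)
    rwa [← spec1 e he] at h
  have edgeEq : ∀ e ∈ Mstar, ∀ f ∈ Mstar, ∀ v : V, v ∈ e → v ∈ f → e = f := by
    intro e he f hf v hv hv'
    by_contra hne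
    exact hMstar.1.2 e he f hf hne v ⟨hv, hv'⟩
  -- the digraph on Mstar edges and its reachability potential
  set Arc : Sym2 V → Sym2 V → Prop := fun e f =>
    e ∈ Mstar ∧ f ∈ Mstar ∧ e ≠ f ∧ G.Adj (uW e) (cW f) with hArc
  set g : Sym2 V → ℕ :=
    fun e => (Mstar.filter (fun f => Relation.ReflTransGen Arc e f)).card with hg
  have gle : ∀ e, g e ≤ Mstar.card := fun e => Finset.card_filter_le _ _
  have R2 : ∀ e f, Arc e f → g f ≤ g e := by
    intro e f h
    apply Finset.card_le_card
    intro x hx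
    simp only [Finset.mem_filter] at hx ⊢
    exact ⟨hx.1, hx.2.head h⟩
  have R4 : ∀ e f, Relation.ReflTransGen Arc e f → g f ≤ g e := by
    intro e f h
    induction h with
    | refl => exact le_refl _
    | tail _ h2 ih => exact (R2 _ _ h2).trans ih
  have R3 : ∀ e f, Arc e f → g e ≤ g f → Relation.ReflTransGen Arc f e := by
    intro e f h hle
    have hsub : Mstar.filter (fun x => Relation.ReflTransGen Arc f x) ⊆
        Mstar.filter (fun x => Relation.ReflTransGen Arc e x) := by
      intro x hx
      simp only [Finset.mem_filter] at hx ⊢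
      exact ⟨hx.1, hx.2.head h⟩
    have heq := Finset.eq_of_subset_of_card_le hsub hle
    have hee : e ∈ Mstar.filter (fun x => Relation.ReflTransGen Arc e x) :=
      Finset.mem_filter.2 ⟨h.1, Relation.ReflTransGen.refl⟩
    rw [← heq] at hee
    exact (Finset.mem_filter.1 hee).2
  -- prices
  set n := Mstar.card with hn
  set ε : ℝ := 1 / (4 * (n + 1)) with hε
  have hεpos : 0 < ε := by rw [hε]; positivity
  have hεgpos : ∀ e, 0 < ε * (g e + 1) := by
    intro e
    have h0 : (0:ℝ) ≤ (g e : ℝ) := Nat.cast_nonneg _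
    have h1 : (0:ℝ) < (g e : ℝ) + 1 := by linarith
    exact mul_pos hεpos h1
  have hεbound : ∀ e, ε * (g e + 1) ≤ 1 / 4 := by
    intro e
    have h1 : (g e : ℝ) + 1 ≤ (n : ℝ) + 1 := by
      have := gle e
      have : (g e : ℝ) ≤ (n : ℝ) := by exact_mod_cast this
      linarith
    have h2 : ε * ((g e : ℝ) + 1) ≤ ε * ((n : ℝ) + 1) :=
      mul_le_mul_of_nonneg_left h1 hεpos.le
    have h3 : ε * ((n : ℝ) + 1) = 1 / 4 := by
      rw [hε]
      field_simp
    linarith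
  set p : V → ℝ := fun v =>
    if h : ∃ e, e ∈ Mstar ∧ v = uW e then ε * (g h.choose + 1)
    else if h' : ∃ e, e ∈ Mstar ∧ v = cW e then 1 - ε * (g h'.choose + 1)
    else 1 with hp
  have uuniq : ∀ e ∈ Mstar, ∀ f ∈ Mstar, uW e = uW f → e = f := by
    intro e he f hf h
    exact edgeEq e he f hf (uW e) (memu e he) (h ▸ memu f hf)
  have cuniq : ∀ e ∈ Mstar, ∀ f ∈ Mstar, cW e = cW f → e = f := by
    intro e he f hf h
    exact edgeEq e he f hf (cW e) (memc e he) (h ▸ memc f hf)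
  have puW : ∀ e ∈ Mstar, p (uW e) = ε * (g e + 1) := by
    intro e he
    have h : ∃ f, f ∈ Mstar ∧ uW e = uW f := ⟨e, he, rfl⟩
    have hce : h.choose = e := by
      have hc := h.choose_spec
      exact uuniq h.choose hc.1 e he hc.2.symm
    simp only [hp]
    rw [dif_pos h, hce]
  have pcW : ∀ e ∈ Mstar, p (cW e) = 1 - ε * (g e + 1) := by
    intro e he
    have h1 : ¬∃ f, f ∈ Mstar ∧ cW e = uW f := by
      rintro ⟨f, hf, hfe⟩
      exact spec3 f hf (hfe ▸ spec4 e he)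
    have h2 : ∃ f, f ∈ Mstar ∧ cW e = cW f := ⟨e, he, rfl⟩
    have hce : h2.choose = e := by
      have hc := h2.choose_spec
      exact cuniq h2.choose hc.1 e he hc.2.symm
    simp only [hp]
    rw [dif_neg h1, dif_pos h2, hce]
  have pother : ∀ v : V, (¬∃ e, e ∈ Mstar ∧ v = uW e) →
      (¬∃ e, e ∈ Mstar ∧ v = cW e) → p v = 1 := by
    intro v h1 h2
    simp only [hp]
    rw [dif_neg h1, dif_neg h2]
  have pbounds : ∀ v, 0 ≤ p v ∧ p v ≤ 1 := by
    intro v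
    by_cases h1 : ∃ e, e ∈ Mstar ∧ v = uW e
    · obtain ⟨e, he, rfl⟩ := h1
      rw [puW e he]
      constructor
      · exact (hεgpos e).le
      · linarith [hεbound e]
    · by_cases h2 : ∃ e, e ∈ Mstar ∧ v = cW e
      · obtain ⟨e, he, rfl⟩ := h2
        rw [pcW e he]
        constructor
        · linarith [hεbound e]
        · linarith [hεgpos e]
      · rw [pother v h1 h2]
        norm_num
  have covcW : ∀ v : V, (∃ m ∈ M₀, v ∈ m) → ∃ e, e ∈ Mstar ∧ v = cW e := by
    intro v hv
    obtain ⟨e, he, hve⟩ := coreA v hv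
    have h1 := spec1 e he
    rw [h1] at hve
    rcases Sym2.mem_iff.1 hve with rfl | rfl
    · exact absurd hv (spec3 e he)
    · exact ⟨e, he, rfl⟩
  -- classification of kept edges
  have KEY1 : ∀ a b : V, G.Adj a b → p a + p b ≤ 1 →
      ∃ e f, e ∈ Mstar ∧ f ∈ Mstar ∧ g e ≤ g f ∧
        ((a = uW e ∧ b = cW f) ∨ (a = cW f ∧ b = uW e)) := by
    intro a b hab hle
    by_cases ha1 : ∃ e, e ∈ Mstar ∧ a = uW e
    · obtain ⟨e, he, rfl⟩ := ha1
      by_cases hb1 : ∃ f, f ∈ Mstar ∧ b = uW f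
      · obtain ⟨f, hf, rfl⟩ := hb1
        rcases F3 _ _ hab with h | h
        · exact absurd h (spec3 e he)
        · exact absurd h (spec3 f hf)
      · by_cases hb2 : ∃ f, f ∈ Mstar ∧ b = cW f
        · obtain ⟨f, hf, rfl⟩ := hb2
          refine ⟨e, f, he, hf, ?_, Or.inl ⟨rfl, rfl⟩⟩
          rw [puW e he, pcW f hf] at hle
          have h1 : ε * ((g e : ℝ) + 1) ≤ ε * ((g f : ℝ) + 1) := by linarith
          have h2 : (g e : ℝ) + 1 ≤ (g f : ℝ) + 1 := le_of_mul_le_mul_left h1 hεpos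
          have h3 : (g e : ℝ) ≤ (g f : ℝ) := by linarith
          exact_mod_cast h3
        · rw [puW e he, pother b hb1 hb2] at hle
          linarith [hεgpos e]
    · by_cases ha2 : ∃ e, e ∈ Mstar ∧ a = cW e
      · obtain ⟨f, hf, rfl⟩ := ha2
        by_cases hb1 : ∃ e, e ∈ Mstar ∧ b = uW e
        · obtain ⟨e, he, rfl⟩ := hb1
          refine ⟨e, f, he, hf, ?_, Or.inr ⟨rfl, rfl⟩⟩
          rw [pcW f hf, puW e he] at hle
          have h1 : ε * ((g e : ℝ) + 1) ≤ ε * ((g f : ℝ) + 1) := by linarith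
          have h2 : (g e : ℝ) + 1 ≤ (g f : ℝ) + 1 := le_of_mul_le_mul_left h1 hεpos
          have h3 : (g e : ℝ) ≤ (g f : ℝ) := by linarith
          exact_mod_cast h3
        · by_cases hb2 : ∃ f', f' ∈ Mstar ∧ b = cW f'
          · obtain ⟨f', hf', rfl⟩ := hb2
            rw [pcW f hf, pcW f' hf'] at hle
            linarith [hεbound f, hεbound f']
          · rw [pcW f hf, pother b hb1 hb2] at hle
            linarith [hεbound f]
      · rw [pother a ha1 ha2] at hle
        by_cases hb1 : ∃ e, e ∈ Mstar ∧ b = uW e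
        · obtain ⟨e, he, rfl⟩ := hb1
          rw [puW e he] at hle
          linarith [hεgpos e]
        · by_cases hb2 : ∃ f, f ∈ Mstar ∧ b = cW f
          · obtain ⟨f, hf, rfl⟩ := hb2
            rw [pcW f hf] at hle
            linarith [hεbound f]
          · rw [pother b hb1 hb2] at hle
            linarith
  have KEY2 : ∀ e ∈ Mstar, p (uW e) + p (cW e) ≤ 1 := by
    intro e he
    rw [puW e he, pcW e he]
    linarith
  -- the keepable set
  set pf : Sym2 V → ℝ := Sym2.lift ⟨fun a b => p a + p b, fun a b => by ring⟩ with hpf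
  have pfmk : ∀ a b : V, pf s(a, b) = p a + p b := by
    intro a b
    simp [hpf]
  set S : Set (Sym2 V) := {x | x ∈ G.edgeSet ∧ pf x ≤ 1} with hS
  have hSsub : S ⊆ (G.edgeSet : Set (Sym2 V)) := fun x hx => hx.1
  have hSmem : ∀ a b : V, (s(a, b) ∈ S ↔ s(a, b) ∈ G.edgeSet ∧ p a + p b ≤ 1) := by
    intro a b
    rw [hS]
    simp only [Set.mem_setOf_eq, pfmk]
  refine ⟨S, hSsub, ⟨p, pbounds, ?_⟩, ?_⟩
  · intro u v huv
    rw [hSmem u v]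
    simp only [G.mem_edgeSet.2 huv, true_and]
  intro M hM
  by_contra hcon
  push_neg at hcon
  obtain ⟨⟨hMG, hMd⟩, hMins⟩ := hM
  have hedge : ∀ x : Sym2 V, x ∈ S → x ∈ (SimpleGraph.fromEdgeSet S).edgeSet := by
    intro x hx
    rw [SimpleGraph.edgeSet_fromEdgeSet]
    exact ⟨hx, G.not_isDiag_of_mem_edgeSet hx.1⟩
  have hMS : ∀ m ∈ M, m ∈ S := by
    intro m hm
    have h := hMG m hm
    rw [SimpleGraph.edgeSet_fromEdgeSet] at h
    exact h.1
  -- adding any kept edge with both endpoints M-uncovered contradicts maximality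
  have addEdge : ∀ x : Sym2 V, x ∈ S → (∀ v : V, v ∈ x → ¬∃ m ∈ M, v ∈ m) → False := by
    intro x hxS hxfree
    have hxM : x ∉ M := fun hxm =>
      hxfree x.out.1 (Sym2.out_fst_mem x) ⟨x, hxm, Sym2.out_fst_mem x⟩
    apply hMins x (hedge x hxS) hxM
    constructor
    · intro e he
      rcases Finset.mem_insert.1 he with rfl | heM
      · exact hedge _ hxS
      · exact hMG e heM
    · intro e he f hf hef v hv
      rcases Finset.mem_insert.1 he with rfl | heM
      · rcases Finset.mem_insert.1 hf with rfl | hfM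
        · exact hef rfl
        · exact hxfree v hv.1 ⟨f, hfM, hv.2⟩
      · rcases Finset.mem_insert.1 hf with rfl | hfM
        · exact hxfree v hv.2 ⟨e, heM, hv.1⟩
        · exact hMd e heM f hfM hef v hv
  -- every Mstar edge has an M-covered endpoint
  have stepB1 : ∀ e ∈ Mstar, ∃ v, v ∈ e ∧ ∃ m ∈ M, v ∈ m := by
    intro e he
    by_contra h
    push_neg at h
    apply addEdge e ?_ ?_
    · rw [hS]
      refine ⟨hMstar.1.1 e he, ?_⟩
      have h2 : pf e = p (uW e) + p (cW e) := by
        have := congrArg pf (spec1 e he)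
        rw [this, pfmk]
      rw [h2]
      exact KEY2 e he
    · intro v hv hvc
      obtain ⟨m, hm, hvm⟩ := hvc
      exact h v hv m hm hvm
  obtain ⟨coreA2, coreB2⟩ := core_count Mstar M hMstar.1.2 stepB1 hcon
  have DorE : ∀ e ∈ Mstar, (∃ m ∈ M, cW e ∈ m) ∨ (∃ m ∈ M, uW e ∈ m) := by
    intro e he
    obtain ⟨v, hv, hvc⟩ := stepB1 e he
    have h1 := spec1 e he
    rw [h1] at hv
    rcases Sym2.mem_iff.1 hv with rfl | rfl
    · exact Or.inr hvc
    · exact Or.inl hvc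
  have notBoth : ∀ e ∈ Mstar, ¬((∃ m ∈ M, cW e ∈ m) ∧ (∃ m ∈ M, uW e ∈ m)) := by
    rintro e he ⟨h1, h2⟩
    exact spec2 e he (coreB2 e he (uW e) (cW e) (memu e he) (memc e he) h2 h1)
  have crossing : ∀ j ∈ Mstar, ∀ i ∈ Mstar, (∃ m ∈ M, cW j ∈ m) → (∃ m ∈ M, uW i ∈ m) →
      G.Adj (uW j) (cW i) → g j ≤ g i → False := by
    intro j hj i hi hcj hui hadj hgle
    apply addEdge s(uW j, cW i) ?_ ?_
    · rw [hSmem]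
      refine ⟨G.mem_edgeSet.2 hadj, ?_⟩
      rw [puW j hj, pcW i hi]
      have h1 : (g j : ℝ) ≤ (g i : ℝ) := by exact_mod_cast hgle
      have h2 : ε * ((g j : ℝ) + 1) ≤ ε * ((g i : ℝ) + 1) :=
        mul_le_mul_of_nonneg_left (by linarith) hεpos.le
      linarith
    · intro v hv
      rcases Sym2.mem_iff.1 hv with rfl | rfl
      · intro hc
        exact notBoth j hj ⟨hcj, hc⟩
      · intro hc
        exact notBoth i hi ⟨hc, hui⟩
  have PATH : ∀ b, b ∈ Mstar → (∃ m ∈ M, uW b ∈ m) →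
      ∀ a, Relation.ReflTransGen Arc a b →
        a ∈ Mstar → (∃ m ∈ M, cW a ∈ m) → g a ≤ g b → False := by
    intro b hb hub a hr
    induction hr using Relation.ReflTransGen.head_induction_on with
    | refl =>
      intro hbM hcov _
      exact notBoth b hb ⟨hcov, hub⟩
    | head h' hr2 ih =>
      intro haM hca hga
      have h1 := R2 _ _ h'
      have h2 := R4 _ _ hr2
      obtain ⟨haM', hcM, hne, hadj⟩ := h'
      rcases DorE _ hcM with hc | hc
      · exact ih hcM hc (by omega)
      · exact crossing _ haM' _ hcM hca hc hadj (by omega)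
  -- derive the contradiction from any edge of M
  obtain ⟨e₀, he₀⟩ := Finset.card_pos.1 (by omega : 0 < Mstar.card)
  obtain ⟨v₀, _, hcv₀⟩ := stepB1 e₀ he₀
  obtain ⟨m, hm, _⟩ := hcv₀
  have hmS := hMS m hm
  induction m using Sym2.ind with
  | _ a b =>
    have hmG : s(a, b) ∈ G.edgeSet := hmS.1
    have hadj : G.Adj a b := G.mem_edgeSet.1 hmG
    have hple : p a + p b ≤ 1 := by
      have := hmS.2
      rwa [pfmk] at this
    obtain ⟨e, f, he, hf, hgef, hcase⟩ := KEY1 a b hadj hple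
    have hca : ∃ m' ∈ M, a ∈ m' := ⟨s(a, b), hm, Sym2.mem_mk_left a b⟩
    have hcb : ∃ m' ∈ M, b ∈ m' := ⟨s(a, b), hm, Sym2.mem_mk_right a b⟩
    have hue : (∃ m' ∈ M, uW e ∈ m') ∧ (∃ m' ∈ M, cW f ∈ m') := by
      rcases hcase with ⟨h1, h2⟩ | ⟨h1, h2⟩
      · exact ⟨h1 ▸ hca, h2 ▸ hcb⟩
      · exact ⟨h2 ▸ hcb, h1 ▸ hca⟩
    have hef : e ≠ f := by
      rintro rfl
      exact notBoth e he ⟨hue.2, hue.1⟩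
    have hadj' : G.Adj (uW e) (cW f) := by
      rcases hcase with ⟨h1, h2⟩ | ⟨h1, h2⟩
      · exact h1 ▸ h2 ▸ hadj
      · exact h1 ▸ h2 ▸ hadj.symm
    have harc : Arc e f := ⟨he, hf, hef, hadj'⟩
    have hreach : Relation.ReflTransGen Arc f e := R3 e f harc hgef
    have hgfe : g f ≤ g e := R2 e f harc
    exact PATH e he hue.1 f hreach hf hue.2 hgfe
end

section
/- Let an ordered partition A_1,…,A_ℓ of V (ℓ even) define the edge labeling where an edge uv with u ∈ A_j, v ∈ A_k, j ≤ k, is 'evicted' if j is even, 'temporarily kept' if j is odd and k = j+1, and 'definitely kept' if j is odd and (k = j or k ≥ j+2). If each pair A_{2i-1}, A_{2i} is replaced by the four sets A_{2i-1}\B, A_{2i}∩B, A_{2i-1}∩B, A_{2i}\B (in this order) for a vertex set B, then: evicted edges stay evicted; definitely kept edges stay definitely kept; a temporarily kept edge becomes evicted if both endpoints are in B, definitely kept if neither endpoint is in B, and stays temporarily kept otherwise. -/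
/-- Refinement of an ordered partition by a vertex set `B`: each pair of classes
    `A_{2i-1}, A_{2i}` is replaced by `A_{2i-1}\B, A_{2i}∩B, A_{2i-1}∩B, A_{2i}\B`
    (so class `2i-1` maps to `4i-3` or `4i-1` and class `2i` to `4i-2` or `4i`,
    according to membership in `B`). Writing `j ≤ k` for the endpoint indices of an
    edge: evicted edges (`j` even) stay evicted; definitely kept edges (`j` odd and
    `k = j` or `k ≥ j+2`) stay definitely kept; a temporarily kept edge (`j` odd,
    `k = j+1`) becomes evicted if both endpoints are in `B`, definitely kept if none
    is, and stays temporarily kept otherwise. -/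
theorem refinement_updates_labels {V : Type*} [Fintype V] [DecidableEq V]
    (G : SimpleGraph V) (ℓ : ℕ) (hℓ : Even ℓ) (idx : V → ℕ)
    (hidx : ∀ v, 1 ≤ idx v ∧ idx v ≤ ℓ) (B : Finset V)
    (idx' : V → ℕ)
    (hidx' : ∀ v, idx' v =
      if Odd (idx v) then (if v ∈ B then 2 * idx v + 1 else 2 * idx v - 1)
      else (if v ∈ B then 2 * idx v - 2 else 2 * idx v)) :
    ∀ u v, G.Adj u v →
      (Even (min (idx u) (idx v)) → Even (min (idx' u) (idx' v))) ∧
      ((Odd (min (idx u) (idx v)) ∧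
          (max (idx u) (idx v) = min (idx u) (idx v) ∨
            min (idx u) (idx v) + 2 ≤ max (idx u) (idx v))) →
        (Odd (min (idx' u) (idx' v)) ∧
          (max (idx' u) (idx' v) = min (idx' u) (idx' v) ∨
            min (idx' u) (idx' v) + 2 ≤ max (idx' u) (idx' v)))) ∧
      ((Odd (min (idx u) (idx v)) ∧
          max (idx u) (idx v) = min (idx u) (idx v) + 1) →
        ((u ∈ B ∧ v ∈ B → Even (min (idx' u) (idx' v))) ∧
         (u ∉ B ∧ v ∉ B →
            Odd (min (idx' u) (idx' v)) ∧
              min (idx' u) (idx' v) + 2 ≤ max (idx' u) (idx' v)) ∧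
         ((u ∈ B ↔ v ∉ B) →
            Odd (min (idx' u) (idx' v)) ∧
              max (idx' u) (idx' v) = min (idx' u) (idx' v) + 1))) := by
  intro u v _
  have hu := hidx u
  have hv := hidx v
  rw [hidx' u, hidx' v]
  by_cases hub : u ∈ B <;> by_cases hvb : v ∈ B <;>
    by_cases hpu : Odd (idx u) <;> by_cases hpv : Odd (idx v) <;>
    simp only [hub, hvb, hpu, hpv, if_true, if_false, iff_true, iff_false,
      not_true, not_false_iff, and_self, true_and, false_and,
      and_true, and_false, true_implies, false_implies, implies_true,
      Nat.odd_iff, Nat.even_iff] <;>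
    simp only [Nat.odd_iff, Nat.not_odd_iff_even, Nat.even_iff] at hpu hpv <;>
    omega
end
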